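/- Let 0<q<1 and 0<α<1, and for an integer k≥1 set M_q(k) := Γ_q(α+1)^{−1}/Γ_q(α(k−1)+1) − 1/Γ_q(αk+1). Then there exists a constant C>0, depending only on q and α, such that for every integer k≥1 one has M_q(k) ≤ C·(1−q)^{(α−1)k}/Γ_q(k+1). -/

import Mathlib

open scoped BigOperators

/-- The infinite q-Pochhammer symbol `(a;q)_∞ = ∏_{j=0}^∞ (1 - q^j a)`. -/
noncomputable def qPochInf (q a : ℝ) : ℝ := ∏' j : ℕ, (1 - q ^ j * a)

/-- The q-gamma function `Γ_q(x) = ((q;q)_∞/(q^x;q)_∞)·(1-q)^{1-x}`. -/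
noncomputable def qGamma (q x : ℝ) : ℝ :=
  (qPochInf q q / qPochInf q (q ^ x)) * (1 - q) ^ (1 - x)

/-- `M_q(k) = Γ_q(α+1)⁻¹/Γ_q(α(k−1)+1) − 1/Γ_q(αk+1)`. -/
noncomputable def Mq (q α : ℝ) (k : ℕ) : ℝ :=
  (qGamma q (α + 1))⁻¹ / qGamma q (α * ((k : ℝ) - 1) + 1) - 1 / qGamma q (α * k + 1)

/-!
Since `Γ_q(x)⁻¹ = ((q^x;q)_∞ / (q;q)_∞) (1-q)^{x-1}` and, for `x ≥ 2`, `(q^x;q)_∞` lies between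
`(q^2;q)_∞ > 0` and `1`, the reciprocal `Γ_q(x)⁻¹` is comparable to `(1-q)^{x-1}` uniformly in
`x ≥ 2`. Dropping the negative term of `M_q(k)` then leaves a multiple of
`(1-q)^{α(k-1)} = (1-q)^{-α} (1-q)^{(α-1)k} (1-q)^k`, and `(1-q)^k` is comparable to `Γ_q(k+1)⁻¹`.
-/

open Real

section qPochInf

variable {q a b : ℝ}

lemma summable_log_one_sub_pow_mul (hq0 : 0 ≤ q) (hq1 : q < 1) (a : ℝ) :
    Summable fun j : ℕ => log (1 - q ^ j * a) := by
  simpa [sub_eq_add_neg] using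
    summable_log_one_add_of_summable ((summable_geometric_of_lt_one hq0 hq1).mul_right a).neg

lemma pow_mul_lt_one (hq0 : 0 ≤ q) (hq1 : q ≤ 1) (ha : a < 1) (j : ℕ) : q ^ j * a < 1 := by
  rcases le_or_gt a 0 with ha0 | ha0
  · exact (mul_nonpos_of_nonneg_of_nonpos (by positivity) ha0).trans_lt one_pos
  · exact mul_lt_one_of_nonneg_of_lt_one_right (pow_le_one₀ hq0 hq1) ha0.le ha

lemma qPochInf_eq_exp_tsum_log (hq0 : 0 ≤ q) (hq1 : q < 1) (ha : a < 1) :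
    qPochInf q a = exp (∑' j : ℕ, log (1 - q ^ j * a)) :=
  (rexp_tsum_eq_tprod (fun j => sub_pos.mpr (pow_mul_lt_one hq0 hq1.le ha j))
    (summable_log_one_sub_pow_mul hq0 hq1 a)).symm

lemma qPochInf_pos (hq0 : 0 ≤ q) (hq1 : q < 1) (ha : a < 1) : 0 < qPochInf q a := by
  rw [qPochInf_eq_exp_tsum_log hq0 hq1 ha]
  exact exp_pos _

lemma qPochInf_le_one (hq0 : 0 ≤ q) (hq1 : q < 1) (ha0 : 0 ≤ a) (ha : a < 1) :
    qPochInf q a ≤ 1 := by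
  rw [qPochInf_eq_exp_tsum_log hq0 hq1 ha, exp_le_one_iff]
  refine tsum_nonpos fun j => log_nonpos ?_ ?_
  · exact (sub_pos.mpr (pow_mul_lt_one hq0 hq1.le ha j)).le
  · exact sub_le_self _ (by positivity)

lemma qPochInf_anti (hq0 : 0 ≤ q) (hq1 : q < 1) (hab : a ≤ b) (hb : b < 1) :
    qPochInf q b ≤ qPochInf q a := by
  rw [qPochInf_eq_exp_tsum_log hq0 hq1 (hab.trans_lt hb), qPochInf_eq_exp_tsum_log hq0 hq1 hb,
    exp_le_exp]
  refine (summable_log_one_sub_pow_mul hq0 hq1 b).tsum_le_tsum (fun j => ?_)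
    (summable_log_one_sub_pow_mul hq0 hq1 a)
  refine log_le_log (sub_pos.mpr (pow_mul_lt_one hq0 hq1.le hb j)) ?_
  gcongr

end qPochInf

section qGamma

variable {q x y : ℝ}

lemma inv_qGamma (hq1 : q ≤ 1) (x : ℝ) :
    (qGamma q x)⁻¹ = qPochInf q (q ^ x) / qPochInf q q * (1 - q) ^ (x - 1) := by
  rw [qGamma, mul_inv, inv_div, ← rpow_neg (sub_nonneg.mpr hq1), neg_sub]

lemma qGamma_pos (hq0 : 0 < q) (hq1 : q < 1) (hx : 0 < x) : 0 < qGamma q x := by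
  have := qPochInf_pos hq0.le hq1 hq1
  have := qPochInf_pos hq0.le hq1 (rpow_lt_one hq0.le hq1 hx)
  have : 0 < 1 - q := sub_pos.mpr hq1
  unfold qGamma
  positivity

lemma inv_qGamma_le (hq0 : 0 < q) (hq1 : q < 1) (hx : 0 < x) :
    (qGamma q x)⁻¹ ≤ (1 - q) ^ (x - 1) / qPochInf q q := by
  have := qPochInf_pos hq0.le hq1 hq1
  rw [inv_qGamma hq1.le, div_mul_eq_mul_div, div_le_div_iff_of_pos_right this]
  exact mul_le_of_le_one_left (rpow_nonneg (sub_nonneg.mpr hq1.le) _)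
    (qPochInf_le_one hq0.le hq1 (rpow_nonneg hq0.le x) (rpow_lt_one hq0.le hq1 hx))

lemma qPochInf_mul_rpow_le_inv_qGamma (hq0 : 0 < q) (hq1 : q < 1) (hy : 0 < y) (hyx : y ≤ x) :
    qPochInf q (q ^ y) / qPochInf q q * (1 - q) ^ (x - 1) ≤ (qGamma q x)⁻¹ := by
  have := qPochInf_pos hq0.le hq1 hq1
  rw [inv_qGamma hq1.le]
  gcongr
  exact qPochInf_anti hq0.le hq1 (rpow_le_rpow_of_exponent_ge hq0 hq1.le hyx)
    (rpow_lt_one hq0.le hq1 hy)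

end qGamma

lemma Mq_le (q α : ℝ) (k : ℕ) (hq0 : 0 < q) (hq1 : q < 1) (hk : 0 < α * k + 1) :
    Mq q α k ≤ (qGamma q (α + 1))⁻¹ * (qGamma q (α * ((k : ℝ) - 1) + 1))⁻¹ := by
  have := qGamma_pos hq0 hq1 hk
  rw [Mq, div_eq_mul_inv, sub_le_self_iff]
  positivity

theorem Mq_upper_bound_general (q α : ℝ) (hq0 : 0 < q) (hq1 : q < 1)
    (hα0 : 0 < α) :
    ∃ C : ℝ, 0 < C ∧ ∀ k : ℕ, 1 ≤ k →
      Mq q α k ≤ C * ((1 - q) ^ ((α - 1) * k) / qGamma q ((k : ℝ) + 1)) := by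
  set G := (qGamma q (α + 1))⁻¹
  set D := qPochInf q q
  set P₂ := qPochInf q (q ^ (2 : ℝ))
  have hG : 0 < G := inv_pos.mpr (qGamma_pos hq0 hq1 (by linarith))
  have hD : 0 < D := qPochInf_pos hq0.le hq1 hq1
  have hP₂ : 0 < P₂ := qPochInf_pos hq0.le hq1 (rpow_lt_one hq0.le hq1 two_pos)
  have hu : 0 < 1 - q := sub_pos.mpr hq1
  refine ⟨G * (1 - q) ^ (-α) / P₂, by positivity, fun k hk => ?_⟩
  have hk : (1 : ℝ) ≤ k := by exact_mod_cast hk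
  have hsplit : (1 - q) ^ (α * ((k : ℝ) - 1) + 1 - 1) =
      (1 - q) ^ (-α) * ((1 - q) ^ ((α - 1) * k) * (1 - q) ^ ((k : ℝ) + 1 - 1)) := by
    rw [← rpow_add hu, ← rpow_add hu]
    ring_nf
  calc Mq q α k ≤ G * (qGamma q (α * ((k : ℝ) - 1) + 1))⁻¹ := Mq_le q α k hq0 hq1 (by nlinarith)
    _ ≤ G * ((1 - q) ^ (α * ((k : ℝ) - 1) + 1 - 1) / D) := by
      gcongr
      exact inv_qGamma_le hq0 hq1 (by nlinarith)
    _ = G * (1 - q) ^ (-α) / P₂ * (1 - q) ^ ((α - 1) * k) *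
          (P₂ / D * (1 - q) ^ ((k : ℝ) + 1 - 1)) := by
      rw [hsplit]
      field_simp
    _ ≤ G * (1 - q) ^ (-α) / P₂ * (1 - q) ^ ((α - 1) * k) * (qGamma q ((k : ℝ) + 1))⁻¹ := by
      gcongr
      exact qPochInf_mul_rpow_le_inv_qGamma hq0 hq1 two_pos (by linarith)
    _ = _ := by ring

theorem Mq_upper_bound (q α : ℝ) (hq0 : 0 < q) (hq1 : q < 1)
    (hα0 : 0 < α) (hα1 : α < 1) :
    ∃ C : ℝ, 0 < C ∧ ∀ k : ℕ, 1 ≤ k →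
      Mq q α k ≤ C * ((1 - q) ^ ((α - 1) * k) / qGamma q ((k : ℝ) + 1)) :=
  Mq_upper_bound_general q α hq0 hq1 hα0
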